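/- Let (X, Y) be jointly distributed random variables on finite sets 𝒳 × 𝒴, let {h_s : 𝒳 → {0,1}^t}_{s∈𝒮} be a strong universal hash family with seed S uniformly distributed on 𝒮 and independent of (X, Y), and let ν ≥ 0. For y ∈ 𝒴 define T(y) = {x : −log₂ P_{X|Y}(x|y) ≤ ν}. Then the probability of the decapsulation-failure event {X ∉ T(Y)} ∪ {∃ x̂ ∈ T(Y) with x̂ ≠ X and h_S(x̂) = h_S(X)} is at most Pr[−log₂ P_{X|Y}(X|Y) > ν] + 2^{ν−t}. Consequently, the OWSKA-based decapsulation (which, given y and the hash value g = h_S(X), outputs the key derived from the unique element x̂ ∈ T(y) with h_S(x̂) = g) recovers X, and hence the correct key, except with at most this probability. -/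

import Mathlib

open scoped BigOperators Classical

/-- A strong universal hash family. -/
def StrongUHF {S X Y : Type*} [Fintype S] [Fintype Y] (h : S → X → Y) : Prop :=
  ∀ x x' : X, x ≠ x' → ∀ a b : Y,
    ((Finset.univ.filter (fun s : S => h s x = a ∧ h s x' = b)).card : ℝ) / Fintype.card S
      = 1 / (Fintype.card Y : ℝ) ^ 2

/-- The decapsulation list `T(y) = {x : −log₂ P_{X|Y}(x|y) ≤ ν} = {x : P_{X|Y}(x|y) ≥ 2^{−ν}}`. -/
noncomputable def decList {𝒳 𝒴 : Type*} [Fintype 𝒳] (p : 𝒳 × 𝒴 → ℝ) (ν : ℝ) (y : 𝒴) :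
    Finset 𝒳 :=
  Finset.univ.filter (fun x : 𝒳 => (2 : ℝ) ^ (-ν) ≤ p (x, y) / ∑ x' : 𝒳, p (x', y))

/-!
Split the failure event into `X ∉ T(Y)` and a collision of `h_S(X)` with some other element of
`T(Y)`. Summing the strong-universality identity over the diagonal pairs `(a, a)` shows that two
fixed distinct inputs collide for exactly a `2^(-t)` fraction of seeds, so a union bound over
`T(y)` bounds the collision probability by `|T(y)| / 2^t`. Every element of `T(y)` has
conditional mass at least `2^(-ν)`, hence `|T(y)| ≤ 2^ν`.
-/

open Finset

namespace StrongUHF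

variable {S X Y : Type*} [Fintype S] [Fintype Y] {h : S → X → Y}

theorem card_filter_eq (hh : StrongUHF h) {x x' : X} (hne : x ≠ x') (a b : Y) :
    (#{s | h s x = a ∧ h s x' = b} : ℝ) = Fintype.card S / Fintype.card Y ^ 2 := by
  rcases isEmpty_or_nonempty S with _ | _
  · simp
  · have hS : (Fintype.card S : ℝ) ≠ 0 := by positivity
    rw [← div_mul_cancel₀ (#{s | h s x = a ∧ h s x' = b} : ℝ) hS, hh x x' hne a b]
    ring

variable [DecidableEq Y]

theorem card_collision (hh : StrongUHF h) {x x' : X} (hne : x ≠ x') :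
    (#{s | h s x = h s x'} : ℝ) = Fintype.card S / Fintype.card Y := by
  have hpair (a : Y) :
      (#{s | h s x = a ∧ h s x' = a} : ℝ) = Fintype.card S / Fintype.card Y ^ 2 := by
    convert hh.card_filter_eq hne a a
  have hfiber : #{s | h s x = h s x'} = ∑ a, #{s | h s x = a ∧ h s x' = a} := by
    rw [card_eq_sum_card_fiberwise fun s _ => mem_coe.2 (mem_univ (h s x))]
    refine sum_congr rfl fun a _ => ?_
    rw [filter_filter]
    congr! 2 with s
    constructor
    · rintro ⟨hxx', rfl⟩; exact ⟨rfl, hxx'.symm⟩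
    · rintro ⟨rfl, hx'⟩; exact ⟨hx'.symm, rfl⟩
  rw [hfiber, Nat.cast_sum]
  simp only [hpair, sum_const, card_univ, nsmul_eq_mul]
  rcases eq_or_ne (Fintype.card Y : ℝ) 0 with hY | hY
  · simp [hY]
  · field_simp

theorem card_exists_collision_le (hh : StrongUHF h) (T : Finset X) (x : X) :
    (#{s | ∃ x' ∈ T, x' ≠ x ∧ h s x' = h s x} : ℝ)
      ≤ #T * (Fintype.card S / Fintype.card Y) := by
  have hsub : ({s | ∃ x' ∈ T, x' ≠ x ∧ h s x' = h s x} : Finset S)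
      ⊆ (T.erase x).biUnion fun x' => {s | h s x' = h s x} := by
    intro s hs
    obtain ⟨x', hx'T, hne, hcoll⟩ := (mem_filter.1 hs).2
    exact mem_biUnion.2 ⟨x', mem_erase.2 ⟨hne, hx'T⟩, mem_filter.2 ⟨mem_univ _, hcoll⟩⟩
  calc (#{s | ∃ x' ∈ T, x' ≠ x ∧ h s x' = h s x} : ℝ)
      ≤ ∑ x' ∈ T.erase x, (#{s | h s x' = h s x} : ℝ) := by
        exact_mod_cast (card_le_card hsub).trans card_biUnion_le
    _ = #(T.erase x) * (Fintype.card S / Fintype.card Y) := by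
        rw [← nsmul_eq_mul, ← sum_const]
        exact sum_congr rfl fun x' hx' => hh.card_collision (ne_of_mem_erase hx')
    _ ≤ #T * (Fintype.card S / Fintype.card Y) := by
        gcongr
        exact erase_subset x T

theorem sum_decap_failure_le (hh : StrongUHF h) (T : Finset X) (x : X) {w : ℝ} (hw : 0 ≤ w) :
    ∑ s : S, w / Fintype.card S *
        (if x ∉ T ∨ ∃ x' ∈ T, x' ≠ x ∧ h s x' = h s x then 1 else 0)
      ≤ (if x ∉ T then w else 0) + w * (#T / Fintype.card Y) := by
  have hcancel : w / Fintype.card S * Fintype.card S ≤ w := by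
    rcases eq_or_ne (Fintype.card S : ℝ) 0 with hS | hS
    · simpa [hS] using hw
    · rw [div_mul_cancel₀ w hS]
  by_cases hx : x ∈ T
  · simp only [hx, not_true_eq_false, false_or, if_false, zero_add, ← mul_sum, sum_boole]
    calc w / Fintype.card S * #{s | ∃ x' ∈ T, x' ≠ x ∧ h s x' = h s x}
        ≤ w / Fintype.card S * (#T * (Fintype.card S / Fintype.card Y)) := by
          gcongr
          exact hh.card_exists_collision_le T x
      _ = w / Fintype.card S * Fintype.card S * (#T / Fintype.card Y) := by ring
      _ ≤ w * (#T / Fintype.card Y) := by gcongr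
  · simp only [hx, not_false_eq_true, true_or, if_true, mul_one, sum_const, card_univ,
      nsmul_eq_mul]
    have : 0 ≤ w * (#T / Fintype.card Y) := by positivity
    linarith

end StrongUHF

theorem card_filter_le_div_sum_le_inv {ι : Type*} [Fintype ι] {q : ι → ℝ} (hq : ∀ i, 0 ≤ q i)
    {c : ℝ} (hc : 0 < c) : (#{i | c ≤ q i / ∑ j, q j} : ℝ) ≤ c⁻¹ := by
  rw [← one_div, le_div_iff₀ hc]
  calc (#{i | c ≤ q i / ∑ j, q j} : ℝ) * c
      ≤ ∑ i ∈ {i | c ≤ q i / ∑ j, q j}, q i / ∑ j, q j := by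
        rw [← nsmul_eq_mul]
        exact card_nsmul_le_sum _ _ _ fun i hi => (mem_filter.1 hi).2
    _ ≤ ∑ i, q i / ∑ j, q j :=
        sum_le_sum_of_subset_of_nonneg (subset_univ _)
          fun i _ _ => div_nonneg (hq i) (sum_nonneg fun j _ => hq j)
    _ ≤ 1 := by
        rw [← sum_div]
        exact div_self_le_one _

theorem card_decList_le {𝒳 𝒴 : Type*} [Fintype 𝒳] {p : 𝒳 × 𝒴 → ℝ} (hp : ∀ w, 0 ≤ p w)
    (ν : ℝ) (y : 𝒴) : (#(decList p ν y) : ℝ) ≤ 2 ^ ν := by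
  calc (#(decList p ν y) : ℝ) ≤ ((2 : ℝ) ^ (-ν))⁻¹ :=
        card_filter_le_div_sum_le_inv (fun x => hp (x, y)) (by positivity)
    _ = 2 ^ ν := by rw [Real.rpow_neg zero_le_two, inv_inv]

theorem owska_decapsulation_failure_bound_general
    {𝒳 𝒴 S : Type*} [Fintype 𝒳] [Fintype 𝒴] [Fintype S]
    (t : ℕ) (h : S → 𝒳 → (Fin t → Bool)) (hUHF : StrongUHF h)
    (p : 𝒳 × 𝒴 → ℝ) (hp : ∀ w, 0 ≤ p w) (hsum : ∑ w : 𝒳 × 𝒴, p w = 1)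
    (ν : ℝ) :
    (∑ x : 𝒳, ∑ y : 𝒴, ∑ s : S,
        (p (x, y) / (Fintype.card S : ℝ)) *
          (if x ∉ decList p ν y ∨ ∃ xh ∈ decList p ν y, xh ≠ x ∧ h s xh = h s x
            then 1 else 0))
      ≤ (∑ x : 𝒳, ∑ y : 𝒴, if x ∉ decList p ν y then p (x, y) else 0)
        + (2 : ℝ) ^ (ν - t) := by
  have hlist : ∀ y, (#(decList p ν y) : ℝ) / Fintype.card (Fin t → Bool) ≤ 2 ^ (ν - t) := by
    intro y
    rw [Fintype.card_fun, Fintype.card_bool, Fintype.card_fin, Nat.cast_pow, Nat.cast_ofNat,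
      Real.rpow_sub two_pos, Real.rpow_natCast]
    gcongr
    exact card_decList_le hp ν y
  calc _ ≤ ∑ x : 𝒳, ∑ y : 𝒴, ((if x ∉ decList p ν y then p (x, y) else 0)
          + p (x, y) * 2 ^ (ν - t)) := by
        gcongr with x _ y _
        grw [hUHF.sum_decap_failure_le (decList p ν y) x (hp (x, y)), hlist y]
        exact hp (x, y)
    _ = _ := by
        simp only [sum_add_distrib, ← sum_mul, ← Fintype.sum_prod_type', hsum, one_mul]

/-- correctness of the OWSKA-based iKEM decapsulation: the probability of the
failure event `{X ∉ T(Y)} ∪ {∃ xh ∈ T(Y), xh ≠ X ∧ h_S(xh) = h_S(X)}` (over `(X, Y)` and the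
independent uniform seed `S`) is at most `Pr[−log₂ P_{X|Y}(X|Y) > ν] + 2^{ν−t}`, i.e. at most
`Pr[X ∉ T(Y)] + 2^{ν−t}`. -/
theorem owska_decapsulation_failure_bound
    {𝒳 𝒴 S : Type*} [Fintype 𝒳] [Fintype 𝒴] [Fintype S] [Nonempty S]
    (t : ℕ) (h : S → 𝒳 → (Fin t → Bool)) (hUHF : StrongUHF h)
    (p : 𝒳 × 𝒴 → ℝ) (hp : ∀ w, 0 ≤ p w) (hsum : ∑ w : 𝒳 × 𝒴, p w = 1)
    (ν : ℝ) (hν : 0 ≤ ν) :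
    (∑ x : 𝒳, ∑ y : 𝒴, ∑ s : S,
        (p (x, y) / (Fintype.card S : ℝ)) *
          (if x ∉ decList p ν y ∨ ∃ xh ∈ decList p ν y, xh ≠ x ∧ h s xh = h s x
            then 1 else 0))
      ≤ (∑ x : 𝒳, ∑ y : 𝒴, if x ∉ decList p ν y then p (x, y) else 0)
        + (2 : ℝ) ^ (ν - t) :=
  owska_decapsulation_failure_bound_general t h hUHF p hp hsum ν
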